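/- arXiv:2101.12262 — 5 statements merged into one kernel-verified Lean document; each statement's English description precedes it below -/
import Mathlib

section
/- Let C be a bivariate copula admitting a tail dependence function Λ. Then (i) Λ is 2-increasing: Λ(u',v') − Λ(u',v) − Λ(u,v') + Λ(u,v) ≥ 0 for all 0 ≤ u ≤ u' and 0 ≤ v ≤ v'; (ii) Λ is grounded: Λ(u,v) = 0 whenever u = 0 or v = 0; (iii) Λ is increasing: Λ(u,v) ≤ Λ(u',v') for 0 ≤ u ≤ u' and 0 ≤ v ≤ v'; and (iv) if Λ is not identically zero, then Λ(u,v) < Λ(u',v') whenever 0 < u < u' and 0 < v < v'. -/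
open MeasureTheory Filter Set

/-- A bivariate copula: `C : [0,1]² → [0,1]` with the grounded/marginal conditions and
the 2-increasing property. -/
def IsCopula (C : ℝ → ℝ → ℝ) : Prop :=
  (∀ u ∈ Icc (0:ℝ) 1, ∀ v ∈ Icc (0:ℝ) 1, C u v ∈ Icc (0:ℝ) 1) ∧
  (∀ u ∈ Icc (0:ℝ) 1, C u 0 = 0 ∧ C 0 u = 0 ∧ C u 1 = u ∧ C 1 u = u) ∧
  (∀ u u' v v' : ℝ, u ∈ Icc (0:ℝ) 1 → u' ∈ Icc (0:ℝ) 1 →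
    v ∈ Icc (0:ℝ) 1 → v' ∈ Icc (0:ℝ) 1 → u ≤ u' → v ≤ v' →
    0 ≤ C u' v' - C u' v - C u v' + C u v)

/-- `Λ` is the tail dependence function of `C`:
`Λ(u,v) = lim_{p↓0} C(pu,pv)/p` for every `(u,v) ∈ [0,∞)²`. -/
def HasTDF (C Λ : ℝ → ℝ → ℝ) : Prop :=
  ∀ u v : ℝ, 0 ≤ u → 0 ≤ v →
    Tendsto (fun p : ℝ => C (p * u) (p * v) / p)
      (nhdsWithin (0:ℝ) (Ioi 0)) (nhds (Λ u v))

open Topology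

/-!
The difference quotients `C (p u) (p v) / p` are 2-increasing and grounded as soon as
`p u, p v ≤ 1`, and both properties pass to the limit `Λ`; a grounded 2-increasing function is
increasing. Moreover `Λ` is positively homogeneous, `Λ (t u) (t v) = t Λ (u, v)`. Scaling a
point where `Λ` is positive down into a box `[0,u] × [0,v]` shows that `Λ > 0` on the open
quadrant, and scaling `(u, v)` by `t = min (u'/u) (v'/v) > 1` gives
`Λ (u, v) < t Λ (u, v) = Λ (t u, t v) ≤ Λ (u', v')`.
-/

section

variable {F : ℝ → ℝ → ℝ}

theorem le_of_twoIncreasing_of_grounded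
    (h2 : ∀ u u' v v' : ℝ, 0 ≤ u → u ≤ u' → 0 ≤ v → v ≤ v' →
      0 ≤ F u' v' - F u' v - F u v' + F u v)
    (hleft : ∀ v, 0 ≤ v → F 0 v = 0) (hright : ∀ u, 0 ≤ u → F u 0 = 0)
    {u u' v v' : ℝ} (hu : 0 ≤ u) (huu : u ≤ u') (hv : 0 ≤ v) (hvv : v ≤ v') :
    F u v ≤ F u' v' := by
  have hu_incr := h2 u u' 0 v' hu huu le_rfl (hv.trans hvv)
  have hv_incr := h2 0 u v v' le_rfl hu hv hvv
  rw [hright u' (hu.trans huu), hright u hu] at hu_incr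
  rw [hleft v' (hv.trans hvv), hleft v hv] at hv_incr
  linarith

theorem min_div_mul_le {a b : ℝ} (x y : ℝ) (ha : 0 < a) (hb : 0 < b) :
    min (x / a) (y / b) * a ≤ x ∧ min (x / a) (y / b) * b ≤ y :=
  ⟨(mul_le_mul_of_nonneg_right (min_le_left _ _) ha.le).trans (div_mul_cancel₀ x ha.ne').le,
    (mul_le_mul_of_nonneg_right (min_le_right _ _) hb.le).trans (div_mul_cancel₀ y hb.ne').le⟩

variable (hmono : ∀ u u' v v' : ℝ, 0 ≤ u → u ≤ u' → 0 ≤ v → v ≤ v' → F u v ≤ F u' v')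
  (hhom : ∀ t u v : ℝ, 0 < t → 0 < u → 0 < v → F (t * u) (t * v) = t * F u v)
include hmono hhom

theorem pos_of_pos_of_homogeneous {a b u v : ℝ} (ha : 0 < a) (hb : 0 < b) (hab : 0 < F a b)
    (hu : 0 < u) (hv : 0 < v) : 0 < F u v := by
  set t := min (u / a) (v / b)
  have ht : 0 < t := lt_min (by positivity) (by positivity)
  obtain ⟨hta, htb⟩ := min_div_mul_le u v ha hb
  calc 0 < t * F a b := mul_pos ht hab
    _ = F (t * a) (t * b) := (hhom t a b ht ha hb).symm
    _ ≤ F u v := hmono _ _ _ _ (by positivity) hta (by positivity) htb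

theorem lt_of_pos_of_homogeneous {u u' v v' : ℝ} (hu : 0 < u) (huu : u < u') (hv : 0 < v)
    (hvv : v < v') (hpos : 0 < F u v) : F u v < F u' v' := by
  set t := min (u' / u) (v' / v)
  have ht : 1 < t := lt_min ((one_lt_div hu).mpr huu) ((one_lt_div hv).mpr hvv)
  obtain ⟨htu, htv⟩ := min_div_mul_le u' v' hu hv
  calc F u v < t * F u v := lt_mul_left hpos ht
    _ = F (t * u) (t * v) := (hhom t u v (by positivity) hu hv).symm
    _ ≤ F u' v' := hmono _ _ _ _ (by positivity) htu (by positivity) htv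

end

theorem eventually_mul_mem_Icc_zero_one {u : ℝ} (hu : 0 ≤ u) :
    ∀ᶠ p in 𝓝[>] (0 : ℝ), p * u ∈ Icc (0 : ℝ) 1 := by
  have hlim : Tendsto (fun p : ℝ => p * u) (𝓝[>] 0) (𝓝 0) :=
    ((continuous_mul_const u).tendsto' 0 0 (zero_mul u)).mono_left nhdsWithin_le_nhds
  filter_upwards [self_mem_nhdsWithin, hlim.eventually (eventually_le_nhds zero_lt_one)]
    with p hp hp1
  exact ⟨mul_nonneg hp.le hu, hp1⟩

namespace HasTDF

variable {C Λ : ℝ → ℝ → ℝ}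

theorem twoIncreasing (hΛ : HasTDF C Λ) (hC : IsCopula C) {u u' v v' : ℝ} (hu : 0 ≤ u)
    (huu : u ≤ u') (hv : 0 ≤ v) (hvv : v ≤ v') :
    0 ≤ Λ u' v' - Λ u' v - Λ u v' + Λ u v := by
  have hu' := hu.trans huu
  have hv' := hv.trans hvv
  refine ge_of_tendsto ((((hΛ u' v' hu' hv').sub (hΛ u' v hu' hv)).sub
    (hΛ u v' hu hv')).add (hΛ u v hu hv)) ?_
  filter_upwards [eventually_mul_mem_Icc_zero_one hu, eventually_mul_mem_Icc_zero_one hu',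
    eventually_mul_mem_Icc_zero_one hv, eventually_mul_mem_Icc_zero_one hv',
    self_mem_nhdsWithin] with p hpu hpu' hpv hpv' (hp : 0 < p)
  rw [div_sub_div_same, div_sub_div_same, ← add_div]
  exact div_nonneg (hC.2.2 _ _ _ _ hpu hpu' hpv hpv' (mul_le_mul_of_nonneg_left huu hp.le)
    (mul_le_mul_of_nonneg_left hvv hp.le)) hp.le

theorem zero_left (hΛ : HasTDF C Λ) (hC : IsCopula C) {v : ℝ} (hv : 0 ≤ v) : Λ 0 v = 0 := by
  refine tendsto_nhds_unique_of_eventuallyEq (hΛ 0 v le_rfl hv) tendsto_const_nhds ?_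
  filter_upwards [eventually_mul_mem_Icc_zero_one hv] with p hp
  simp [(hC.2.1 _ hp).2.1]

theorem zero_right (hΛ : HasTDF C Λ) (hC : IsCopula C) {u : ℝ} (hu : 0 ≤ u) : Λ u 0 = 0 := by
  refine tendsto_nhds_unique_of_eventuallyEq (hΛ u 0 hu le_rfl) tendsto_const_nhds ?_
  filter_upwards [eventually_mul_mem_Icc_zero_one hu] with p hp
  simp [(hC.2.1 _ hp).1]

theorem homogeneous (hΛ : HasTDF C Λ) {t u v : ℝ} (ht : 0 < t) (hu : 0 ≤ u) (hv : 0 ≤ v) :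
    Λ (t * u) (t * v) = t * Λ u v := by
  have hscale : Tendsto (t * ·) (𝓝[>] (0 : ℝ)) (𝓝[>] 0) :=
    tendsto_comap.mono_left (comap_mulLeft_nhdsGT_zero ht).ge
  refine tendsto_nhds_unique_of_eventuallyEq (hΛ (t * u) (t * v) (by positivity) (by positivity))
    (((hΛ u v hu hv).comp hscale).const_mul t) ?_
  filter_upwards [self_mem_nhdsWithin] with p (hp : 0 < p)
  simp only [Function.comp_apply, ← mul_assoc, mul_comm p t]
  field_simp

end HasTDF

theorem tdf_two_increasing_grounded_monotone (C Λ : ℝ → ℝ → ℝ)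
    (hC : IsCopula C) (hΛ : HasTDF C Λ) :
    (∀ u u' v v' : ℝ, 0 ≤ u → u ≤ u' → 0 ≤ v → v ≤ v' →
      0 ≤ Λ u' v' - Λ u' v - Λ u v' + Λ u v) ∧
    (∀ u v : ℝ, 0 ≤ u → 0 ≤ v → (u = 0 ∨ v = 0) → Λ u v = 0) ∧
    (∀ u u' v v' : ℝ, 0 ≤ u → u ≤ u' → 0 ≤ v → v ≤ v' → Λ u v ≤ Λ u' v') ∧
    ((¬ ∀ u v : ℝ, 0 ≤ u → 0 ≤ v → Λ u v = 0) →
      ∀ u u' v v' : ℝ, 0 < u → u < u' → 0 < v → v < v' → Λ u v < Λ u' v') := by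
  have hmono : ∀ u u' v v' : ℝ, 0 ≤ u → u ≤ u' → 0 ≤ v → v ≤ v' → Λ u v ≤ Λ u' v' :=
    fun _ _ _ _ => le_of_twoIncreasing_of_grounded (fun _ _ _ _ => hΛ.twoIncreasing hC)
      (fun _ => hΛ.zero_left hC) (fun _ => hΛ.zero_right hC)
  have hhom : ∀ t u v : ℝ, 0 < t → 0 < u → 0 < v → Λ (t * u) (t * v) = t * Λ u v :=
    fun _ _ _ ht hu hv => hΛ.homogeneous ht hu.le hv.le
  refine ⟨fun _ _ _ _ => hΛ.twoIncreasing hC, ?_, hmono, ?_⟩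
  · rintro u v hu hv (rfl | rfl)
    exacts [hΛ.zero_left hC hv, hΛ.zero_right hC hu]
  · intro hne u u' v v' hu huu hv hvv
    push Not at hne
    obtain ⟨a, b, ha, hb, hab⟩ := hne
    have ha0 : 0 < a := ha.lt_of_ne fun h => hab (h ▸ hΛ.zero_left hC hb)
    have hb0 : 0 < b := hb.lt_of_ne fun h => hab (h ▸ hΛ.zero_right hC ha)
    have hab0 : 0 < Λ a b :=
      (hΛ.zero_left hC le_rfl ▸ hmono 0 a 0 b le_rfl ha le_rfl hb).lt_of_ne' hab
    exact lt_of_pos_of_homogeneous hmono hhom hu huu hv hvv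
      (pos_of_pos_of_homogeneous hmono hhom ha0 hb0 hab0 hu hv)
end

section
/- Let C be a bivariate copula admitting a tail dependence function Λ. Then Λ is superadditive: Λ(u+u', v+v') ≥ Λ(u,v) + Λ(u',v') for all (u,v), (u',v') ∈ [0,∞)²; and Λ is concave: Λ(t·(u,v) + (1−t)·(u',v')) ≥ t·Λ(u,v) + (1−t)·Λ(u',v') for every t ∈ [0,1] and all (u,v), (u',v') ∈ [0,∞)². -/
open MeasureTheory Filter Set

/-! Passing to the limit `p ↓ 0` in the 2-increasing property and the boundary conditions of `C`
shows that `Λ` is supermodular, vanishes on the axis `v = 0`, is nondecreasing and 1-Lipschitz in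
`u`, and is positively homogeneous. So `Λ (u, v) = v h (u / v)` with `h x = Λ (x, 1)`, and
supermodularity on the rectangle `[c, c r] × [1, r]` gives `r h (c / r) + h (c r) ≤ (1 + r) h c`:
every point lies below a chord over a pair of points straddling it, arbitrarily close to it. For a
continuous `h` this forces concavity, by looking at the leftmost minimiser of `h` minus a chord.
Superadditivity of `Λ` is then concavity of its perspective, and concavity of `Λ` follows from
superadditivity and homogeneity. -/

open Topology

theorem chord_le_of_exists_straddling_le {f : ℝ → ℝ} {x y : ℝ} (hxy : x ≤ y)
    (hf : ContinuousOn f (Icc x y))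
    (h : ∀ c ∈ Ioo x y, ∃ a ∈ Ico x c, ∃ b ∈ Ioc c y, ∃ t : ℝ,
      t * a + (1 - t) * b = c ∧ t * f a + (1 - t) * f b ≤ f c)
    {c : ℝ} (hc : c ∈ Icc x y) : (y - c) * f x + (c - x) * f y ≤ (y - x) * f c := by
  set g : ℝ → ℝ := fun z => (y - x) * f z - ((y - z) * f x + (z - x) * f y)
  have hg : ContinuousOn g (Icc x y) := by fun_prop
  suffices 0 ≤ g c by simp only [g] at this; linarith
  by_contra! hneg
  obtain ⟨z, hz, hmin⟩ := isCompact_Icc.exists_isMinOn (nonempty_Icc.2 hxy) hg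
  -- the leftmost minimiser of `g` cannot be straddled by a pair improving on it
  set K := Icc x y ∩ g ⁻¹' {g z}
  have hK : IsCompact K := isCompact_Icc.of_isClosed_subset
    (hg.preimage_isClosed_of_isClosed isClosed_Icc isClosed_singleton) inter_subset_left
  obtain ⟨c₀, ⟨hc₀, hgc₀⟩, hleast⟩ := hK.exists_isLeast ⟨z, hz, rfl⟩
  have hgc₀ : g c₀ = g z := hgc₀
  have hgz : g z < 0 := (hmin hc).trans_lt hneg
  have hxc₀ : x ≠ c₀ := by
    rintro rfl
    have hgx : g x = 0 := by simp only [g]; ring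
    linarith
  have hc₀y : c₀ ≠ y := by
    rintro rfl
    have hgy : g c₀ = 0 := by simp only [g]; ring
    linarith
  obtain ⟨a, ha, b, hb, t, htc, hle⟩ :=
    h c₀ ⟨lt_of_le_of_ne hc₀.1 hxc₀, lt_of_le_of_ne hc₀.2 hc₀y⟩
  have hga : g z < g a := by
    refine lt_of_le_of_ne (hmin ⟨ha.1, ha.2.le.trans hc₀.2⟩) fun hza => ?_
    exact absurd (hleast ⟨⟨ha.1, ha.2.le.trans hc₀.2⟩, hza.symm⟩) (not_le.2 ha.2)
  have hgb : g z ≤ g b := hmin ⟨hc₀.1.trans hb.1.le, hb.2⟩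
  have ht : 0 < t := by nlinarith [ha.2, hb.1]
  have ht1 : 0 < 1 - t := by nlinarith [ha.2, hb.1]
  have hgle : t * g a + (1 - t) * g b ≤ g c₀ := by
    subst htc
    simp only [g]
    linarith [mul_le_mul_of_nonneg_left hle (sub_nonneg.2 hxy)]
  linarith [mul_lt_mul_of_pos_left hga ht, mul_le_mul_of_nonneg_left hgb ht1.le]

theorem concaveOn_of_exists_straddling_le {f : ℝ → ℝ} {s : Set ℝ} (hs : Convex ℝ s)
    (hf : ContinuousOn f s)
    (h : ∀ x ∈ s, ∀ y ∈ s, ∀ c ∈ Ioo x y, ∃ a ∈ Ico x c, ∃ b ∈ Ioc c y, ∃ t : ℝ,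
      t * a + (1 - t) * b = c ∧ t * f a + (1 - t) * f b ≤ f c) :
    ConcaveOn ℝ s f := by
  refine concaveOn_of_slope_anti_adjacent hs fun {x c y} hx hy hxc hcy => ?_
  have hsub : Icc x y ⊆ s := hs.ordConnected.out hx hy
  have key := chord_le_of_exists_straddling_le (hxc.trans hcy).le (hf.mono hsub)
    (fun c' hc' => h x hx y hy c' hc') ⟨hxc.le, hcy.le⟩
  rw [div_le_div_iff₀ (sub_pos.2 hcy) (sub_pos.2 hxc)]
  linarith

theorem eventually_mul_mem_Icc {u : ℝ} (hu : 0 ≤ u) :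
    ∀ᶠ p in 𝓝[>] (0:ℝ), p * u ∈ Icc (0:ℝ) 1 := by
  have hlim : Tendsto (fun p : ℝ => p * u) (𝓝[>] 0) (𝓝 0) := by
    simpa using ((continuous_mul_const u).tendsto 0).mono_left nhdsWithin_le_nhds
  filter_upwards [self_mem_nhdsWithin, hlim.eventually (gt_mem_nhds one_pos)] with p hp hp1
  exact ⟨mul_nonneg (le_of_lt hp) hu, hp1.le⟩

section TailDependence

variable {C Λ : ℝ → ℝ → ℝ}

theorem HasTDF.apply_zero_right (hΛ : HasTDF C Λ) (hC : IsCopula C) {u : ℝ} (hu : 0 ≤ u) :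
    Λ u 0 = 0 := by
  refine tendsto_nhds_unique (hΛ u 0 hu le_rfl) (tendsto_const_nhds.congr' ?_)
  filter_upwards [eventually_mul_mem_Icc hu] with p hp
  rw [mul_zero, (hC.2.1 _ hp).1, zero_div]

theorem HasTDF.supermodular (hΛ : HasTDF C Λ) (hC : IsCopula C) {u u' v v' : ℝ}
    (hu : 0 ≤ u) (huu' : u ≤ u') (hv : 0 ≤ v) (hvv' : v ≤ v') :
    Λ u' v + Λ u v' ≤ Λ u' v' + Λ u v := by
  have hu' := hu.trans huu'
  have hv' := hv.trans hvv'
  have hlim := ((hΛ u' v' hu' hv').add (hΛ u v hu hv)).sub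
    ((hΛ u' v hu' hv).add (hΛ u v' hu hv'))
  refine sub_nonneg.1 (ge_of_tendsto hlim ?_)
  filter_upwards [self_mem_nhdsWithin, eventually_mul_mem_Icc hu, eventually_mul_mem_Icc hu',
    eventually_mul_mem_Icc hv, eventually_mul_mem_Icc hv'] with p hp hpu hpu' hpv hpv'
  have hrect := hC.2.2 _ _ _ _ hpu hpu' hpv hpv'
    (mul_le_mul_of_nonneg_left huu' (le_of_lt hp)) (mul_le_mul_of_nonneg_left hvv' (le_of_lt hp))
  calc (0:ℝ)
      ≤ (C (p * u') (p * v') - C (p * u') (p * v) - C (p * u) (p * v') + C (p * u) (p * v)) / p :=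
        div_nonneg hrect (le_of_lt hp)
    _ = _ := by ring

theorem HasTDF.apply_sub_apply_le (hΛ : HasTDF C Λ) (hC : IsCopula C) {u u' v : ℝ}
    (hu : 0 ≤ u) (huu' : u ≤ u') (hv : 0 ≤ v) :
    Λ u' v - Λ u v ≤ u' - u := by
  have hu' := hu.trans huu'
  refine le_of_tendsto ((hΛ u' v hu' hv).sub (hΛ u v hu hv)) ?_
  filter_upwards [self_mem_nhdsWithin, eventually_mul_mem_Icc hu, eventually_mul_mem_Icc hu',
    eventually_mul_mem_Icc hv] with p hp hpu hpu' hpv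
  -- the rectangle `[pu, pu'] × [pv, 1]` has nonnegative `C`-volume, and `C (·) 1` is the identity
  have hrect := hC.2.2 _ _ _ _ hpu hpu' hpv (right_mem_Icc.2 zero_le_one)
    (mul_le_mul_of_nonneg_left huu' (le_of_lt hp)) hpv.2
  rw [(hC.2.1 _ hpu).2.2.1, (hC.2.1 _ hpu').2.2.1] at hrect
  rw [div_sub_div_same, div_le_iff₀ hp]
  linarith

theorem HasTDF.mono_left (hΛ : HasTDF C Λ) (hC : IsCopula C) {u u' v : ℝ}
    (hu : 0 ≤ u) (huu' : u ≤ u') (hv : 0 ≤ v) : Λ u v ≤ Λ u' v := by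
  have := hΛ.supermodular hC hu huu' le_rfl hv
  rw [hΛ.apply_zero_right hC hu, hΛ.apply_zero_right hC (hu.trans huu')] at this
  linarith

theorem HasTDF.homogeneous_s3 (hΛ : HasTDF C Λ) (hC : IsCopula C) {c u v : ℝ}
    (hc : 0 ≤ c) (hu : 0 ≤ u) (hv : 0 ≤ v) : Λ (c * u) (c * v) = c * Λ u v := by
  rcases hc.eq_or_lt with rfl | hc
  · simp only [zero_mul, hΛ.apply_zero_right hC le_rfl]
  have hmul : Tendsto (c * ·) (𝓝[>] (0:ℝ)) (𝓝[>] 0) := by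
    simpa only [comap_mulLeft_nhdsGT_zero hc] using tendsto_comap (f := (c * ·)) (x := 𝓝[>] 0)
  refine tendsto_nhds_unique (hΛ _ _ (mul_nonneg hc.le hu) (mul_nonneg hc.le hv))
    ((((hΛ u v hu hv).comp hmul).const_mul c).congr fun p => ?_)
  rw [Function.comp_apply, mul_assoc c p u, mul_assoc c p v, mul_left_comm c p u,
    mul_left_comm c p v, mul_div_assoc', mul_div_mul_left _ _ hc.ne']

theorem HasTDF.apply_eq_mul_apply_div (hΛ : HasTDF C Λ) (hC : IsCopula C) {u v : ℝ}
    (hu : 0 ≤ u) (hv : 0 < v) : Λ u v = v * Λ (u / v) 1 := by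
  rw [← hΛ.homogeneous_s3 hC hv.le (div_nonneg hu hv.le) zero_le_one, mul_div_cancel₀ u hv.ne',
    mul_one]

theorem HasTDF.geometric_chord_le (hΛ : HasTDF C Λ) (hC : IsCopula C) {c r : ℝ}
    (hc : 0 ≤ c) (hr : 1 ≤ r) : r * Λ (c / r) 1 + Λ (c * r) 1 ≤ (1 + r) * Λ c 1 := by
  have hr₀ : 0 < r := zero_lt_one.trans_le hr
  have := hΛ.supermodular hC hc (le_mul_of_one_le_right hc hr) zero_le_one hr
  rw [hΛ.apply_eq_mul_apply_div hC hc hr₀, hΛ.apply_eq_mul_apply_div hC (mul_nonneg hc hr₀.le) hr₀,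
    mul_div_cancel_right₀ c hr₀.ne'] at this
  linarith

theorem HasTDF.lipschitzOnWith_apply_one (hΛ : HasTDF C Λ) (hC : IsCopula C) :
    LipschitzOnWith 1 (fun x => Λ x 1) (Ici 0) := by
  refine LipschitzOnWith.of_le_add fun a ha b hb => ?_
  rcases le_total a b with hab | hba
  · linarith [hΛ.mono_left hC ha hab zero_le_one, dist_nonneg (x := a) (y := b)]
  · linarith [hΛ.apply_sub_apply_le hC hb hba zero_le_one, Real.dist_eq a b, le_abs_self (a - b)]

theorem HasTDF.concaveOn_apply_one (hΛ : HasTDF C Λ) (hC : IsCopula C) :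
    ConcaveOn ℝ (Ici 0) (fun x => Λ x 1) := by
  refine concaveOn_of_exists_straddling_le (convex_Ici 0)
    (hΛ.lipschitzOnWith_apply_one hC).continuousOn fun x hx y _ c ⟨hxc, hcy⟩ => ?_
  have hc : 0 < c := lt_of_le_of_lt hx hxc
  obtain ⟨r, hr, hxr, hry⟩ : ∃ r, 1 < r ∧ x < c / r ∧ c * r < y := by
    have hdiv : Tendsto (fun r => c / r) (𝓝 1) (𝓝 c) := by
      simpa [div_eq_mul_inv] using ((continuous_id.tendsto (1:ℝ)).inv₀ one_ne_zero).const_mul c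
    have hmul : Tendsto (fun r => c * r) (𝓝 1) (𝓝 c) := by
      simpa using (continuous_id.tendsto (1:ℝ)).const_mul c
    exact ((eventually_mem_nhdsWithin (a := (1:ℝ)) (s := Ioi 1)).and (nhdsWithin_le_nhds
      ((hdiv.eventually (lt_mem_nhds hxc)).and (hmul.eventually (gt_mem_nhds hcy))))).exists
  refine ⟨c / r, ⟨hxr.le, div_lt_self hc hr⟩, c * r, ⟨lt_mul_of_one_lt_right hc hr, hry.le⟩,
    r / (1 + r), by field_simp; ring, ?_⟩
  have key := hΛ.geometric_chord_le hC hc.le hr.le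
  calc r / (1 + r) * Λ (c / r) 1 + (1 - r / (1 + r)) * Λ (c * r) 1
      = (r * Λ (c / r) 1 + Λ (c * r) 1) / (1 + r) := by field_simp; ring
    _ ≤ Λ c 1 := by rw [div_le_iff₀ (by positivity)]; linarith

theorem HasTDF.superadditive (hΛ : HasTDF C Λ) (hC : IsCopula C) {u v u' v' : ℝ}
    (hu : 0 ≤ u) (hv : 0 ≤ v) (hu' : 0 ≤ u') (hv' : 0 ≤ v') :
    Λ u v + Λ u' v' ≤ Λ (u + u') (v + v') := by
  rcases hv.eq_or_lt with rfl | hv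
  · rw [hΛ.apply_zero_right hC hu, zero_add, zero_add]
    exact hΛ.mono_left hC hu' (le_add_of_nonneg_left hu) hv'
  rcases hv'.eq_or_lt with rfl | hv'
  · rw [hΛ.apply_zero_right hC hu', add_zero, add_zero]
    exact hΛ.mono_left hC hu (le_add_of_nonneg_right hu') hv.le
  have hvv' : 0 < v + v' := add_pos hv hv'
  have hconc := (hΛ.concaveOn_apply_one hC).2 (div_nonneg hu hv.le) (div_nonneg hu' hv'.le)
    (div_nonneg hv.le hvv'.le) (div_nonneg hv'.le hvv'.le) (by field_simp)
  have hpt : v / (v + v') * (u / v) + v' / (v + v') * (u' / v') = (u + u') / (v + v') := by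
    rw [div_mul_div_comm, div_mul_div_comm, mul_comm v u, mul_comm v' u',
      mul_div_mul_right _ _ hv.ne', mul_div_mul_right _ _ hv'.ne', add_div]
  simp only [smul_eq_mul, hpt] at hconc
  rw [hΛ.apply_eq_mul_apply_div hC hu hv, hΛ.apply_eq_mul_apply_div hC hu' hv',
    hΛ.apply_eq_mul_apply_div hC (add_nonneg hu hu') hvv']
  calc v * Λ (u / v) 1 + v' * Λ (u' / v') 1
      = (v + v') * (v / (v + v') * Λ (u / v) 1 + v' / (v + v') * Λ (u' / v') 1) := by
        field_simp
    _ ≤ (v + v') * Λ ((u + u') / (v + v')) 1 := mul_le_mul_of_nonneg_left hconc hvv'.le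

end TailDependence

theorem tdf_superadditive_concave (C Λ : ℝ → ℝ → ℝ)
    (hC : IsCopula C) (hΛ : HasTDF C Λ) :
    (∀ u v u' v' : ℝ, 0 ≤ u → 0 ≤ v → 0 ≤ u' → 0 ≤ v' →
      Λ u v + Λ u' v' ≤ Λ (u + u') (v + v')) ∧
    (∀ t u v u' v' : ℝ, t ∈ Icc (0:ℝ) 1 → 0 ≤ u → 0 ≤ v → 0 ≤ u' → 0 ≤ v' →
      t * Λ u v + (1 - t) * Λ u' v' ≤ Λ (t * u + (1 - t) * u') (t * v + (1 - t) * v')) := by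
  refine ⟨fun u v u' v' hu hv hu' hv' => hΛ.superadditive hC hu hv hu' hv', ?_⟩
  rintro t u v u' v' ⟨ht, ht1⟩ hu hv hu' hv'
  have hs : 0 ≤ 1 - t := sub_nonneg.2 ht1
  rw [← hΛ.homogeneous_s3 hC ht hu hv, ← hΛ.homogeneous_s3 hC hs hu' hv']
  exact hΛ.superadditive hC (mul_nonneg ht hu) (mul_nonneg ht hv) (mul_nonneg hs hu')
    (mul_nonneg hs hv')
end

section
/- Let Λ : [0,∞)² → [0,∞) be positively homogeneous of degree one (Λ(tu,tv) = t·Λ(u,v) for t ≥ 0), 2-increasing (Λ(u',v') − Λ(u',v) − Λ(u,v') + Λ(u,v) ≥ 0 for u ≤ u', v ≤ v'), and satisfy 0 ≤ Λ(u,v) ≤ min(u,v) for all (u,v). Define C_Λ(u,v) = max(Λ(u,v), u+v−1) for (u,v) ∈ [0,1]². Then C_Λ is a bivariate copula, and its tail dependence function exists and equals Λ, i.e. lim_{p↓0} C_Λ(pu,pv)/p = Λ(u,v) for every (u,v) ∈ [0,∞)². -/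
open MeasureTheory Filter Set

theorem copula_with_prescribed_tdf (Λ : ℝ → ℝ → ℝ)
    (hhom : ∀ t u v : ℝ, 0 ≤ t → 0 ≤ u → 0 ≤ v → Λ (t * u) (t * v) = t * Λ u v)
    (h2inc : ∀ u u' v v' : ℝ, 0 ≤ u → u ≤ u' → 0 ≤ v → v ≤ v' →
      0 ≤ Λ u' v' - Λ u' v - Λ u v' + Λ u v)
    (hbd : ∀ u v : ℝ, 0 ≤ u → 0 ≤ v → 0 ≤ Λ u v ∧ Λ u v ≤ min u v) :
    IsCopula (fun u v => max (Λ u v) (u + v - 1)) ∧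
    HasTDF (fun u v => max (Λ u v) (u + v - 1)) Λ := by
  -- groundedness of Λ
  have h0l : ∀ v : ℝ, 0 ≤ v → Λ 0 v = 0 := by
    intro v hv
    have h := hbd 0 v le_rfl hv
    have : min (0:ℝ) v = 0 := min_eq_left hv
    exact le_antisymm (by rw [this] at h; exact h.2) h.1
  have h0r : ∀ u : ℝ, 0 ≤ u → Λ u 0 = 0 := by
    intro u hu
    have h := hbd u 0 hu le_rfl
    have : min u (0:ℝ) = 0 := min_eq_right hu
    exact le_antisymm (by rw [this] at h; exact h.2) h.1
  -- monotonicity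
  have hmono2 : ∀ u v v' : ℝ, 0 ≤ u → 0 ≤ v → v ≤ v' → Λ u v ≤ Λ u v' := by
    intro u v v' hu hv hvv
    have h := h2inc 0 u v v' le_rfl hu hv hvv
    rw [h0l v hv, h0l v' (hv.trans hvv)] at h
    linarith
  have hmono1 : ∀ u u' v : ℝ, 0 ≤ u → u ≤ u' → 0 ≤ v → Λ u v ≤ Λ u' v := by
    intro u u' v hu huu hv
    have h := h2inc u u' 0 v hu huu le_rfl hv
    rw [h0r u hu, h0r u' (hu.trans huu)] at h
    linarith
  -- Lipschitz in the first coordinate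
  have hlip1 : ∀ u u' v : ℝ, 0 ≤ u → u ≤ u' → 0 ≤ v → Λ u' v ≤ Λ u v + (u' - u) := by
    intro u u' v hu huu hv
    rcases eq_or_lt_of_le hu with h | h
    · rw [← h, h0l v hv]
      have h1 := (hbd u' v (h ▸ huu) hv).2
      have h2 : min u' v ≤ u' := min_le_left _ _
      linarith
    · set t := u' / u with ht
      have ht1 : 1 ≤ t := (one_le_div h).mpr huu
      have htu : t * u = u' := div_mul_cancel₀ _ h.ne'
      have htv : v ≤ t * v := by nlinarith
      have key := h2inc u u' v (t * v) hu huu hv htv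
      have hh : Λ u' (t * v) = t * Λ u v := by
        rw [← htu]; exact hhom t u v (by positivity) h.le hv
      have hm := hmono2 u v (t * v) h.le hv htv
      have hΛu : Λ u v ≤ u := (hbd u v h.le hv).2.trans (min_le_left _ _)
      have hΛ0 : 0 ≤ Λ u v := (hbd u v h.le hv).1
      -- Λ u' v ≤ t * Λ u v ≤ Λ u v + (t-1) * u = Λ u v + (u' - u)
      have h1 : Λ u' v ≤ t * Λ u v := by rw [hh] at key; linarith
      have h2 : (t - 1) * u = u' - u := by rw [sub_mul, one_mul, htu]
      nlinarith [mul_nonneg (sub_nonneg.mpr ht1) (sub_nonneg.mpr hΛu)]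
  -- Lipschitz in the second coordinate
  have hlip2 : ∀ u v v' : ℝ, 0 ≤ u → 0 ≤ v → v ≤ v' → Λ u v' ≤ Λ u v + (v' - v) := by
    intro u v v' hu hv hvv
    rcases eq_or_lt_of_le hv with h | h
    · rw [← h, h0r u hu]
      have h1 := (hbd u v' hu (h ▸ hvv)).2
      have h2 : min u v' ≤ v' := min_le_right _ _
      linarith
    · set t := v' / v with ht
      have ht1 : 1 ≤ t := (one_le_div h).mpr hvv
      have htv : t * v = v' := div_mul_cancel₀ _ h.ne'
      have htu : u ≤ t * u := by nlinarith
      have key := h2inc u (t * u) v v' hu htu hv hvv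
      have hh : Λ (t * u) v' = t * Λ u v := by
        rw [← htv]; exact hhom t u v (by positivity) hu h.le
      have hm := hmono1 u (t * u) v hu htu h.le
      have hΛv : Λ u v ≤ v := (hbd u v hu h.le).2.trans (min_le_right _ _)
      have hΛ0 : 0 ≤ Λ u v := (hbd u v hu h.le).1
      have h1 : Λ u v' ≤ t * Λ u v := by rw [hh] at key; linarith
      have h2 : (t - 1) * v = v' - v := by rw [sub_mul, one_mul, htv]
      nlinarith [mul_nonneg (sub_nonneg.mpr ht1) (sub_nonneg.mpr hΛv)]
  constructor
  · refine ⟨?_, ?_, ?_⟩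
    · -- range
      intro u hu v hv
      dsimp only
      constructor
      · exact le_max_of_le_left (hbd u v hu.1 hv.1).1
      · apply max_le
        · exact (hbd u v hu.1 hv.1).2.trans ((min_le_left _ _).trans hu.2)
        · linarith [hu.2, hv.2]
      -- done
    · -- boundary
      intro u hu
      dsimp only
      refine ⟨?_, ?_, ?_, ?_⟩
      · rw [h0r u hu.1]
        exact max_eq_left (by linarith [hu.2])
      · rw [h0l u hu.1]
        exact max_eq_left (by linarith [hu.2])
      · have : Λ u 1 ≤ u := (hbd u 1 hu.1 zero_le_one).2.trans (min_le_left _ _)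
        rw [max_eq_right (by linarith)]
        ring
      · have : Λ 1 u ≤ u := (hbd 1 u zero_le_one hu.1).2.trans (min_le_right _ _)
        rw [max_eq_right (by linarith)]
        ring
    · -- 2-increasing
      intro u u' v v' hu hu' hv hv' huu hvv
      dsimp only
      have hcuv1 : Λ u v ≤ max (Λ u v) (u + v - 1) := le_max_left _ _
      have hcuv2 : u + v - 1 ≤ max (Λ u v) (u + v - 1) := le_max_right _ _
      rcases le_total (Λ u' v') (u' + v' - 1) with hA | hA
      · rw [max_eq_right hA]
        rcases le_total (Λ u' v) (u' + v - 1) with hB | hB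
        · rw [max_eq_right hB]
          have k1 : Λ u v' ≤ max (Λ u v) (u + v - 1) + (v' - v) := by
            have := hlip2 u v v' hu.1 hv.1 hvv
            linarith
          have k2 : u + v' - 1 ≤ max (Λ u v) (u + v - 1) + (v' - v) := by linarith
          have := max_le k1 k2
          linarith
        · rw [max_eq_left hB]
          rcases le_total (Λ u v') (u + v' - 1) with hC | hC
          · rw [max_eq_right hC]
            have := hlip1 u u' v hu.1 huu hv.1
            linarith
          · rw [max_eq_left hC]
            have := h2inc u u' v v' hu.1 huu hv.1 hvv
            linarith
      · rw [max_eq_left hA]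
        rcases le_total (Λ u' v) (u' + v - 1) with hB | hB
        · rw [max_eq_right hB]
          rcases le_total (Λ u v') (u + v' - 1) with hC | hC
          · rw [max_eq_right hC]
            linarith
          · rw [max_eq_left hC]
            have := hlip2 u v v' hu.1 hv.1 hvv
            linarith
        · rw [max_eq_left hB]
          rcases le_total (Λ u v') (u + v' - 1) with hC | hC
          · rw [max_eq_right hC]
            have := hlip1 u u' v hu.1 huu hv.1
            linarith
          · rw [max_eq_left hC]
            have := h2inc u u' v v' hu.1 huu hv.1 hvv
            linarith
  · -- tail dependence function
    intro u v hu hv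
    have hδ : (0:ℝ) < 1 / (u + v + 1) := by positivity
    have hev : (fun _ : ℝ => Λ u v) =ᶠ[nhdsWithin (0:ℝ) (Ioi 0)]
        (fun p : ℝ => max (Λ (p * u) (p * v)) (p * u + p * v - 1) / p) := by
      filter_upwards [Ioo_mem_nhdsGT_of_mem (left_mem_Ico.mpr hδ)] with p hp
      have hp0 : 0 < p := hp.1
      have hΛ0 : 0 ≤ Λ u v := (hbd u v hu hv).1
      have hlt : p * (u + v + 1) < 1 := (lt_div_iff₀ (by positivity)).mp hp.2
      have hW : p * u + p * v - 1 ≤ p * Λ u v := by nlinarith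
      rw [hhom p u v hp0.le hu hv, max_eq_left hW, mul_div_cancel_left₀ _ hp0.ne']
    exact Filter.Tendsto.congr' hev tendsto_const_nhds
end

section
/- Let C be a bivariate copula admitting a tail dependence function Λ, and let μ be a tail generating measure. For p ∈ (0,1) set λ_{μ,p}(C) = (∫_{[0,1]²} (C(pu,pv) − pu·pv) dμ(u,v)) / (∫_{[0,1]²} (min(pu,pv) − pu·pv) dμ(u,v)). Then for each p ∈ (0,1) the denominator is strictly positive and finite, and lim_{p↓0} λ_{μ,p}(C) = (∫_{[0,1]²} Λ(u,v) dμ(u,v)) / (∫_{[0,1]²} min(u,v) dμ(u,v)). -/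
/-!
After division by `p`, the numerator becomes `∫ (C(pu,pv)/p - p·uv) dμ`. This converges to
`∫ Λ dμ` by dominated convergence, because `0 ≤ C(pu,pv)/p ≤ min(u,v) ≤ 1` on the unit square.
The denominator is the numerator for the comonotone copula `min`, whose tail dependence
function is `min` itself. Its limit `∫ min dμ` is positive because `μ` charges the open
quadrant, and the same fact gives positivity at each level `p`, since the integrand is
at least `p(1-p)·min(u,v)`.
-/

open MeasureTheory Filter Set

/-- A tail generating measure: a Borel probability measure on `[0,1]²` whose mass is not
concentrated on `{u = 0} ∪ {v = 0}`. -/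
def IsTailGenMeasure (μ : Measure (ℝ × ℝ)) : Prop :=
  IsProbabilityMeasure μ ∧
  μ ((Icc (0:ℝ) 1 ×ˢ Icc (0:ℝ) 1)ᶜ) = 0 ∧
  μ {q : ℝ × ℝ | q.1 = 0 ∨ q.2 = 0} < 1

/-- The μ-tail dependence measure: `λ_μ = (∫ Λ dμ) / (∫ min dμ)`, applied to
the tail dependence function `Λ` of the copula. -/
noncomputable def tdm (Λ : ℝ → ℝ → ℝ) (μ : Measure (ℝ × ℝ)) : ℝ :=
  (∫ q, Λ q.1 q.2 ∂μ) / (∫ q : ℝ × ℝ, min q.1 q.2 ∂μ)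

open scoped Topology

namespace IsCopula

variable {C : ℝ → ℝ → ℝ}

theorem swap (hC : IsCopula C) : IsCopula (Function.swap C) := by
  obtain ⟨hrange, hbdry, hrect⟩ := hC
  refine ⟨fun u hu v hv => hrange v hv u hu, fun u hu => ?_, ?_⟩
  · obtain ⟨h0, h0', h1, h1'⟩ := hbdry u hu
    exact ⟨h0', h0, h1', h1⟩
  · intro u u' v v' hu hu' hv hv' huu' hvv'
    have := hrect v v' u u' hv hv' hu hu' hvv' huu'
    simp only [Function.swap]
    linarith

theorem mono_left (hC : IsCopula C) {u u' v : ℝ} (hu : u ∈ Icc 0 1) (hu' : u' ∈ Icc 0 1)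
    (hv : v ∈ Icc 0 1) (h : u ≤ u') : C u v ≤ C u' v := by
  have := hC.2.2 u u' 0 v hu hu' (by simp) hv h hv.1
  linarith [(hC.2.1 u hu).1, (hC.2.1 u' hu').1]

theorem sub_le_of_le_left (hC : IsCopula C) {u u' v : ℝ} (hu : u ∈ Icc 0 1)
    (hu' : u' ∈ Icc 0 1) (hv : v ∈ Icc 0 1) (h : u ≤ u') : C u' v - C u v ≤ u' - u := by
  have := hC.2.2 u u' v 1 hu hu' hv (by simp) h hv.2
  linarith [(hC.2.1 u hu).2.2.1, (hC.2.1 u' hu').2.2.1]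

theorem abs_sub_le_left (hC : IsCopula C) {u u' v : ℝ} (hu : u ∈ Icc 0 1)
    (hu' : u' ∈ Icc 0 1) (hv : v ∈ Icc 0 1) : |C u v - C u' v| ≤ |u - u'| := by
  rw [abs_sub_le_iff]
  rcases le_total u u' with h | h
  · have := hC.mono_left hu hu' hv h
    have := hC.sub_le_of_le_left hu hu' hv h
    constructor <;> linarith [neg_abs_le (u - u'), le_abs_self (u - u')]
  · have := hC.mono_left hu' hu hv h
    have := hC.sub_le_of_le_left hu' hu hv h
    constructor <;> linarith [neg_abs_le (u - u'), le_abs_self (u - u')]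

theorem abs_sub_le_right (hC : IsCopula C) {u v v' : ℝ} (hu : u ∈ Icc 0 1)
    (hv : v ∈ Icc 0 1) (hv' : v' ∈ Icc 0 1) : |C u v - C u v'| ≤ |v - v'| :=
  hC.swap.abs_sub_le_left hv hv' hu

theorem le_min (hC : IsCopula C) {u v : ℝ} (hu : u ∈ Icc 0 1) (hv : v ∈ Icc 0 1) :
    C u v ≤ min u v := by
  have h₁ : C u v ≤ C 1 v := hC.mono_left hu (by simp) hv hu.2
  have h₂ : C u v ≤ C u 1 := hC.swap.mono_left hv (by simp) hu hv.2
  rw [(hC.2.1 v hv).2.2.2] at h₁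
  rw [(hC.2.1 u hu).2.2.1] at h₂
  exact _root_.le_min h₂ h₁

theorem lipschitzOnWith (hC : IsCopula C) :
    LipschitzOnWith 2 (fun q : ℝ × ℝ => C q.1 q.2) (Icc 0 1 ×ˢ Icc 0 1) := by
  refine LipschitzOnWith.of_dist_le_mul fun x ⟨hx₁, hx₂⟩ y ⟨hy₁, hy₂⟩ => ?_
  simp only [Prod.dist_eq, Real.dist_eq, NNReal.coe_ofNat]
  calc |C x.1 x.2 - C y.1 y.2| ≤ |C x.1 x.2 - C y.1 x.2| + |C y.1 x.2 - C y.1 y.2| :=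
        abs_sub_le _ _ _
    _ ≤ |x.1 - y.1| + |x.2 - y.2| :=
        add_le_add (hC.abs_sub_le_left hx₁ hy₁ hx₂) (hC.abs_sub_le_right hy₁ hx₂ hy₂)
    _ ≤ 2 * max |x.1 - y.1| |x.2 - y.2| := by
        linarith [le_max_left |x.1 - y.1| |x.2 - y.2|, le_max_right |x.1 - y.1| |x.2 - y.2|]

theorem continuousOn_comp_mul (hC : IsCopula C) {p : ℝ} (hp : p ∈ Icc 0 1) :
    ContinuousOn (fun q : ℝ × ℝ => C (p * q.1) (p * q.2)) (Icc 0 1 ×ˢ Icc 0 1) :=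
  hC.lipschitzOnWith.continuousOn.comp (f := fun q : ℝ × ℝ => (p * q.1, p * q.2))
    (by fun_prop) fun _ hq =>
    ⟨unitInterval.mul_mem hp hq.1, unitInterval.mul_mem hp hq.2⟩

theorem div_mem_Icc (hC : IsCopula C) {p u v : ℝ} (hp : p ∈ Ioo 0 1) (hu : u ∈ Icc 0 1)
    (hv : v ∈ Icc 0 1) : C (p * u) (p * v) / p ∈ Icc 0 1 := by
  have hpu := unitInterval.mul_mem (Ioo_subset_Icc_self hp) hu
  have hpv := unitInterval.mul_mem (Ioo_subset_Icc_self hp) hv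
  have hle : C (p * u) (p * v) ≤ p :=
    (hC.le_min hpu hpv).trans <| (min_le_left _ _).trans (mul_le_of_le_one_right hp.1.le hu.2)
  exact ⟨div_nonneg (hC.1 _ hpu _ hpv).1 hp.1.le, (div_le_one hp.1).2 hle⟩

end IsCopula

theorem isCopula_min : IsCopula fun u v => min u v := by
  refine ⟨fun u hu v hv => ⟨_root_.le_min hu.1 hv.1, (min_le_left u v).trans hu.2⟩,
    fun u hu => ⟨min_eq_right hu.1, min_eq_left hu.1, min_eq_left hu.2, min_eq_right hu.2⟩, ?_⟩
  intro u u' v v' _ _ _ _ huu' hvv'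
  simp only [min_def]
  split_ifs <;> linarith

theorem hasTDF_min : HasTDF (fun u v => min u v) (fun u v => min u v) := by
  intro u v _ _
  refine tendsto_const_nhds.congr' (eventually_nhdsWithin_of_forall fun p (hp : 0 < p) => ?_)
  show min u v = min (p * u) (p * v) / p
  rw [← mul_min_of_nonneg _ _ hp.le, mul_div_cancel_left₀ _ hp.ne']

theorem ContinuousOn.integrable_of_isCompact_of_measure_compl_eq_zero {X E : Type*}
    [TopologicalSpace X] [T2Space X] [MeasurableSpace X] [OpensMeasurableSpace X]
    [NormedAddCommGroup E] {μ : Measure X} [IsFiniteMeasure μ] {K : Set X} {f : X → E}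
    (hK : IsCompact K) (hf : ContinuousOn f K) (hμ : μ Kᶜ = 0) : Integrable f μ := by
  have hrestrict : μ.restrict K = μ := Measure.restrict_eq_self_of_ae_mem (mem_ae_iff.2 hμ)
  simpa only [IntegrableOn, hrestrict] using hf.integrableOn_compact (μ := μ) hK

theorem tendsto_integral_copula_sub_mul_div {μ : Measure (ℝ × ℝ)} {C Λ : ℝ → ℝ → ℝ}
    (hC : IsCopula C) (hΛ : HasTDF C Λ) [IsFiniteMeasure μ] (hμ : μ (Icc 0 1 ×ˢ Icc 0 1)ᶜ = 0) :
    Tendsto (fun p : ℝ => (∫ q : ℝ × ℝ, (C (p * q.1) (p * q.2) - (p * q.1) * (p * q.2)) ∂μ) / p)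
      (𝓝[>] 0) (𝓝 (∫ q, Λ q.1 q.2 ∂μ)) := by
  have hsq : ∀ᵐ q ∂μ, q ∈ Icc (0 : ℝ) 1 ×ˢ Icc (0 : ℝ) 1 := mem_ae_iff.2 hμ
  have hp : ∀ᶠ p in 𝓝[>] (0 : ℝ), p ∈ Ioo (0 : ℝ) 1 := Ioo_mem_nhdsGT one_pos
  have hlim : Tendsto (fun p : ℝ => ∫ q : ℝ × ℝ, (C (p * q.1) (p * q.2) / p - p * (q.1 * q.2)) ∂μ)
      (𝓝[>] 0) (𝓝 (∫ q, Λ q.1 q.2 ∂μ)) := by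
    refine tendsto_integral_filter_of_dominated_convergence (fun _ => 1) ?_ ?_
      (integrable_const 1) ?_
    · refine hp.mono fun p hp => ?_
      have hcont := (hC.continuousOn_comp_mul (Ioo_subset_Icc_self hp)).div_const p
      exact ((hcont.sub (by fun_prop)).integrable_of_isCompact_of_measure_compl_eq_zero
        (isCompact_Icc.prod isCompact_Icc) hμ).aestronglyMeasurable
    · refine hp.mono fun p hp => hsq.mono fun q ⟨hq₁, hq₂⟩ => ?_
      have h₁ := hC.div_mem_Icc hp hq₁ hq₂
      have h₂ : p * (q.1 * q.2) ∈ Icc (0 : ℝ) 1 :=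
        unitInterval.mul_mem (Ioo_subset_Icc_self hp) (unitInterval.mul_mem hq₁ hq₂)
      rw [Real.norm_eq_abs, abs_sub_le_iff]
      constructor <;> linarith [h₁.1, h₁.2, h₂.1, h₂.2]
    · refine hsq.mono fun q ⟨hq₁, hq₂⟩ => ?_
      have hmul : Tendsto (fun p : ℝ => p * (q.1 * q.2)) (𝓝[>] 0) (𝓝 0) := by
        simpa using ((tendsto_id (x := 𝓝 (0 : ℝ))).mul_const (q.1 * q.2)).mono_left
          nhdsWithin_le_nhds
      simpa using (hΛ q.1 q.2 hq₁.1 hq₂.1).sub hmul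
  refine hlim.congr' (hp.mono fun p hp => ?_)
  dsimp only
  rw [← integral_div]
  congr 1 with q
  rw [sub_div, show p * q.1 * (p * q.2) = p * (q.1 * q.2) * p by ring,
    mul_div_cancel_right₀ _ hp.1.ne']

namespace IsTailGenMeasure

variable {μ : Measure (ℝ × ℝ)}

theorem measure_pos_quadrant (hμ : IsTailGenMeasure μ) :
    0 < μ {q : ℝ × ℝ | 0 < q.1 ∧ 0 < q.2} := by
  obtain ⟨hprob, hsq, haxes⟩ := hμ
  have hcompl : {q : ℝ × ℝ | 0 < q.1 ∧ 0 < q.2}ᶜ ≤ᵐ[μ] {q : ℝ × ℝ | q.1 = 0 ∨ q.2 = 0} := by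
    filter_upwards [mem_ae_iff.2 hsq] with q ⟨hq₁, hq₂⟩ (hq : ¬(0 < q.1 ∧ 0 < q.2))
    show q.1 = 0 ∨ q.2 = 0
    by_contra! h
    exact hq ⟨hq₁.1.lt_of_ne' h.1, hq₂.1.lt_of_ne' h.2⟩
  refine pos_iff_ne_zero.2 fun h0 => ?_
  have hle := measure_univ_le_add_compl (μ := μ) {q : ℝ × ℝ | 0 < q.1 ∧ 0 < q.2}
  rw [measure_univ, h0, zero_add] at hle
  exact (hle.trans (measure_mono_ae hcompl)).not_gt haxes

theorem integrable_min (hμ : IsTailGenMeasure μ) :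
    Integrable (fun q : ℝ × ℝ => min q.1 q.2) μ :=
  have := hμ.1
  (continuous_fst.min continuous_snd).continuousOn
    |>.integrable_of_isCompact_of_measure_compl_eq_zero (isCompact_Icc.prod isCompact_Icc) hμ.2.1

theorem integral_min_pos (hμ : IsTailGenMeasure μ) : 0 < ∫ q : ℝ × ℝ, min q.1 q.2 ∂μ := by
  have hnn : 0 ≤ᵐ[μ] fun q : ℝ × ℝ => min q.1 q.2 := by
    filter_upwards [mem_ae_iff.2 hμ.2.1] with q hq using le_min hq.1.1 hq.2.1
  rw [integral_pos_iff_support_of_nonneg_ae hnn hμ.integrable_min]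
  exact hμ.measure_pos_quadrant.trans_le (measure_mono fun q hq => (lt_min hq.1 hq.2).ne')

theorem integrable_min_mul_sub_mul (hμ : IsTailGenMeasure μ) (p : ℝ) :
    Integrable (fun q : ℝ × ℝ => min (p * q.1) (p * q.2) - (p * q.1) * (p * q.2)) μ := by
  have := hμ.1
  exact (Continuous.continuousOn (by fun_prop))
    |>.integrable_of_isCompact_of_measure_compl_eq_zero (isCompact_Icc.prod isCompact_Icc) hμ.2.1

theorem integral_min_mul_sub_mul_pos (hμ : IsTailGenMeasure μ) {p : ℝ} (hp : p ∈ Ioo 0 1) :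
    0 < ∫ q : ℝ × ℝ, (min (p * q.1) (p * q.2) - (p * q.1) * (p * q.2)) ∂μ := by
  have hpointwise : ∀ᵐ q ∂μ,
      p * (1 - p) * min q.1 q.2 ≤ min (p * q.1) (p * q.2) - (p * q.1) * (p * q.2) := by
    filter_upwards [mem_ae_iff.2 hμ.2.1] with q ⟨hq₁, hq₂⟩
    have hmul : q.1 * q.2 ≤ min q.1 q.2 :=
      le_min (mul_le_of_le_one_right hq₁.1 hq₂.2) (mul_le_of_le_one_left hq₂.1 hq₁.2)
    rw [← mul_min_of_nonneg _ _ hp.1.le]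
    nlinarith [mul_pos hp.1 hp.1]
  calc 0 < p * (1 - p) * ∫ q : ℝ × ℝ, min q.1 q.2 ∂μ :=
        mul_pos (mul_pos hp.1 (sub_pos.2 hp.2)) hμ.integral_min_pos
    _ = ∫ q : ℝ × ℝ, p * (1 - p) * min q.1 q.2 ∂μ := (integral_const_mul _ _).symm
    _ ≤ _ := integral_mono_ae (hμ.integrable_min.const_mul _)
        (hμ.integrable_min_mul_sub_mul p) hpointwise

end IsTailGenMeasure

theorem tdm_level_p_limit (C Λ : ℝ → ℝ → ℝ)
    (hC : IsCopula C) (hΛ : HasTDF C Λ)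
    (μ : Measure (ℝ × ℝ)) (hμ : IsTailGenMeasure μ) :
    (∀ p : ℝ, p ∈ Ioo (0:ℝ) 1 →
      Integrable (fun q : ℝ × ℝ => min (p * q.1) (p * q.2) - (p * q.1) * (p * q.2)) μ ∧
      0 < ∫ q : ℝ × ℝ, (min (p * q.1) (p * q.2) - (p * q.1) * (p * q.2)) ∂μ) ∧
    Tendsto (fun p : ℝ =>
        (∫ q : ℝ × ℝ, (C (p * q.1) (p * q.2) - (p * q.1) * (p * q.2)) ∂μ) /
        (∫ q : ℝ × ℝ, (min (p * q.1) (p * q.2) - (p * q.1) * (p * q.2)) ∂μ))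
      (nhdsWithin (0:ℝ) (Ioi 0))
      (nhds ((∫ q, Λ q.1 q.2 ∂μ) / (∫ q : ℝ × ℝ, min q.1 q.2 ∂μ))) := by
  refine ⟨fun p hp => ⟨hμ.integrable_min_mul_sub_mul p, hμ.integral_min_mul_sub_mul_pos hp⟩, ?_⟩
  have := hμ.1
  have hnum := tendsto_integral_copula_sub_mul_div hC hΛ hμ.2.1
  have hden := tendsto_integral_copula_sub_mul_div isCopula_min hasTDF_min hμ.2.1
  refine (hnum.div hden hμ.integral_min_pos.ne').congr' <|
    eventually_nhdsWithin_of_forall fun p (hp : 0 < p) => ?_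
  exact div_div_div_cancel_right₀ hp.ne' _ _
end

section
/- Let C and C' be bivariate copulas admitting tail dependence functions Λ(·;C) and Λ(·;C'), and define the marginal functions Λ₁(u;C) = Λ(u,1;C) and Λ₂(v;C) = Λ(1,v;C) for u,v ∈ [0,1]. Then: (1) for all (u,v) ∈ [0,∞)², Λ(u,v;C) = v·Λ₁(u/v;C) if 0 < u ≤ v, and Λ(u,v;C) = u·Λ₂(v/u;C) if 0 < v < u; and (2) the inequalities Λ₁(u;C) ≤ Λ₁(u;C') and Λ₂(v;C) ≤ Λ₂(v;C') for all u,v ∈ [0,1] hold if and only if Λ(u,v;C) ≤ Λ(u,v;C') for all (u,v) ∈ [0,∞)². -/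
/-!
Substituting `p ↦ c p` in the defining limit shows that a tail dependence function is positively
homogeneous of degree one. Hence `Λ(u, v)` is `v Λ(u/v, 1)` or `u Λ(1, v/u)`, according to which
coordinate is larger, so `Λ` is determined by its two marginals on `[0, 1]`, and comparing
marginals is the same as comparing the functions on the whole quadrant.
-/

open MeasureTheory Filter Set

open Topology

namespace HasTDF

variable {C C' Λ Λ' : ℝ → ℝ → ℝ}

theorem apply_mul_mul (hΛ : HasTDF C Λ) {c u v : ℝ} (hc : 0 < c) (hu : 0 ≤ u) (hv : 0 ≤ v) :
    Λ (c * u) (c * v) = c * Λ u v := by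
  have hscale : Tendsto (c * ·) (𝓝[>] (0 : ℝ)) (𝓝[>] 0) :=
    tendsto_iff_comap.2 (comap_mulLeft_nhdsGT_zero hc).ge
  refine tendsto_nhds_unique (hΛ _ _ (by positivity) (by positivity)) ?_
  refine (((hΛ u v hu hv).comp hscale).const_mul c).congr' ?_
  filter_upwards [self_mem_nhdsWithin] with p (hp : 0 < p)
  simp only [Function.comp_apply, mul_assoc, mul_left_comm c p]
  field_simp

theorem apply_zero_zero (hΛ : HasTDF C Λ) : Λ 0 0 = 0 := by
  have h := hΛ.apply_mul_mul two_pos le_rfl le_rfl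
  rw [mul_zero] at h
  linarith

theorem eq_mul_apply_div_one (hΛ : HasTDF C Λ) {u v : ℝ} (hu : 0 ≤ u) (hv : 0 < v) :
    Λ u v = v * Λ (u / v) 1 := by
  simpa [mul_div_cancel₀ u hv.ne'] using
    hΛ.apply_mul_mul hv (div_nonneg hu hv.le) zero_le_one

theorem eq_mul_apply_one_div (hΛ : HasTDF C Λ) {u v : ℝ} (hu : 0 < u) (hv : 0 ≤ v) :
    Λ u v = u * Λ 1 (v / u) := by
  simpa [mul_div_cancel₀ v hu.ne'] using
    hΛ.apply_mul_mul hu zero_le_one (div_nonneg hv hu.le)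

theorem le_of_marginals_le (hΛ : HasTDF C Λ) (hΛ' : HasTDF C' Λ')
    (h₁ : ∀ u ∈ Icc (0 : ℝ) 1, Λ u 1 ≤ Λ' u 1) (h₂ : ∀ v ∈ Icc (0 : ℝ) 1, Λ 1 v ≤ Λ' 1 v)
    {u v : ℝ} (hu : 0 ≤ u) (hv : 0 ≤ v) : Λ u v ≤ Λ' u v := by
  rcases le_or_gt u v with huv | hvu
  · rcases hv.eq_or_lt with rfl | hv
    · obtain rfl : u = 0 := le_antisymm huv hu
      rw [hΛ.apply_zero_zero, hΛ'.apply_zero_zero]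
    · rw [hΛ.eq_mul_apply_div_one hu hv, hΛ'.eq_mul_apply_div_one hu hv]
      exact mul_le_mul_of_nonneg_left
        (h₁ _ ⟨div_nonneg hu hv.le, (div_le_one hv).2 huv⟩) hv.le
  · have hu : 0 < u := hv.trans_lt hvu
    rw [hΛ.eq_mul_apply_one_div hu hv, hΛ'.eq_mul_apply_one_div hu hv]
    exact mul_le_mul_of_nonneg_left
      (h₂ _ ⟨div_nonneg hv hu.le, (div_le_one hu).2 hvu.le⟩) hu.le

end HasTDF

theorem tdf_marginal_decomposition_and_order_general (C C' Λ Λ' : ℝ → ℝ → ℝ)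
    (hΛ : HasTDF C Λ) (hΛ' : HasTDF C' Λ') :
    (∀ u v : ℝ, (0 < u → u ≤ v → Λ u v = v * Λ (u / v) 1) ∧
                (0 < v → v < u → Λ u v = u * Λ 1 (v / u))) ∧
    (((∀ u ∈ Icc (0:ℝ) 1, Λ u 1 ≤ Λ' u 1) ∧ (∀ v ∈ Icc (0:ℝ) 1, Λ 1 v ≤ Λ' 1 v)) ↔
      (∀ u v : ℝ, 0 ≤ u → 0 ≤ v → Λ u v ≤ Λ' u v)) := by
  refine ⟨fun u v => ⟨fun hu huv => hΛ.eq_mul_apply_div_one hu.le (hu.trans_le huv),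
    fun hv hvu => hΛ.eq_mul_apply_one_div (hv.trans hvu) hv.le⟩, ?_⟩
  constructor
  · rintro ⟨h₁, h₂⟩ u v hu hv
    exact hΛ.le_of_marginals_le hΛ' h₁ h₂ hu hv
  · intro h
    exact ⟨fun u hu => h u 1 hu.1 zero_le_one, fun v hv => h 1 v zero_le_one hv.1⟩

theorem tdf_marginal_decomposition_and_order (C C' Λ Λ' : ℝ → ℝ → ℝ)
    (hC : IsCopula C) (hC' : IsCopula C')
    (hΛ : HasTDF C Λ) (hΛ' : HasTDF C' Λ') :
    (∀ u v : ℝ, (0 < u → u ≤ v → Λ u v = v * Λ (u / v) 1) ∧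
                (0 < v → v < u → Λ u v = u * Λ 1 (v / u))) ∧
    (((∀ u ∈ Icc (0:ℝ) 1, Λ u 1 ≤ Λ' u 1) ∧ (∀ v ∈ Icc (0:ℝ) 1, Λ 1 v ≤ Λ' 1 v)) ↔
      (∀ u v : ℝ, 0 ≤ u → 0 ≤ v → Λ u v ≤ Λ' u v)) :=
  tdf_marginal_decomposition_and_order_general C C' Λ Λ' hΛ hΛ'
end
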